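/- For every x ∈ (0,1) and every t ∈ [0,T], the denominator 𝔞⁺(x)𝔢_t⁺(x) + 𝔞⁻(x)𝔢_t⁻(x) is nonzero, the function t ↦ f_t(x) is differentiable with derivative (d/dt) f_t(x) = (f_t(x))² − (1 − e^{−2π√(−1)x}) ε, and it satisfies the terminal condition f_T(x) = (1 − e^{−2π√(−1)x}) c. In other words, the explicit function f solves the auxiliary complex Riccati equation. -/

import Mathlib

open scoped BigOperators

/-- `𝔯(x) := (2(1 − cos(2πx)))^{1/4}`. -/
noncomputable def frakr (x : ℝ) : ℝ := (2 * (1 - Real.cos (2 * Real.pi * x))) ^ ((1:ℝ)/4)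

/-- `θ(x) := (1/2) arctan( sin(2πx) / (1 − cos(2πx)) )`. -/
noncomputable def thetaCat (x : ℝ) : ℝ :=
  (1/2) * Real.arctan (Real.sin (2 * Real.pi * x) / (1 - Real.cos (2 * Real.pi * x)))

/-- The complex number `𝔯(x) e^{√(−1) θ(x)}`. -/
noncomputable def rTheta (x : ℝ) : ℂ := (frakr x : ℂ) * Complex.exp (Complex.I * (thetaCat x : ℂ))

/-- `𝔞⁺(x) := √ε + c 𝔯(x) e^{√(−1)θ(x)}`. -/
noncomputable def aPlus (ε c : ℝ) (x : ℝ) : ℂ := (Real.sqrt ε : ℂ) + (c : ℂ) * rTheta x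

/-- `𝔞⁻(x) := √ε − c 𝔯(x) e^{√(−1)θ(x)}`. -/
noncomputable def aMinus (ε c : ℝ) (x : ℝ) : ℂ := (Real.sqrt ε : ℂ) - (c : ℂ) * rTheta x

/-- `𝔢_t⁺(x) := exp( √ε 𝔯(x) e^{√(−1)θ(x)} (T−t) )`. -/
noncomputable def ePlus (T ε : ℝ) (t x : ℝ) : ℂ :=
  Complex.exp ((Real.sqrt ε : ℂ) * rTheta x * ((T : ℂ) - (t : ℂ)))

/-- `𝔢_t⁻(x) := exp( −√ε 𝔯(x) e^{√(−1)θ(x)} (T−t) )`. -/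
noncomputable def eMinus (T ε : ℝ) (t x : ℝ) : ℂ :=
  Complex.exp (-((Real.sqrt ε : ℂ) * rTheta x * ((T : ℂ) - (t : ℂ))))

/-- The Catalan generating-type function
`f_t(x) := √ε 𝔯(x) e^{√(−1)θ(x)} (𝔞⁺𝔢_t⁺ − 𝔞⁻𝔢_t⁻)/(𝔞⁺𝔢_t⁺ + 𝔞⁻𝔢_t⁻)`, for `x ∈ (0,1)`. -/
noncomputable def fCat (T ε c : ℝ) (t x : ℝ) : ℂ :=
  (Real.sqrt ε : ℂ) * rTheta x *
    ((aPlus ε c x * ePlus T ε t x - aMinus ε c x * eMinus T ε t x) /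
      (aPlus ε c x * ePlus T ε t x + aMinus ε c x * eMinus T ε t x))

/-- The extension of `f` to `[0,1]` by `f_t(0) := 0` and `f_t(1) := 0`. -/
noncomputable def fCatExt (T ε c : ℝ) (t x : ℝ) : ℂ :=
  if x = 0 ∨ x = 1 then 0 else fCat T ε c t x

/-! `𝔯(x) e^{√(−1)θ(x)}` is the principal square root `k` of `1 − e^{−2π√(−1)x}`: its square has
modulus `𝔯(x)² = |1 − e^{−2π√(−1)x}|` and argument `2θ(x)`, and `Re k > 0`. Writing
`f = k N / D` with `N, D = 𝔞⁺ e^{k(T−t)} ∓ 𝔞⁻ e^{−k(T−t)}`, one has `N' = −k D` and `D' = −k N`,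
the linearization of the Riccati equation `f' = f² − k²`. The denominator `D` equals `2√ε` at
`t = T`, and for `t < T` it cannot vanish because `|𝔞⁻| ≤ |𝔞⁺|` while
`|e^{−k(T−t)}| < |e^{k(T−t)}|`. -/

open Complex

section Riccati

variable {𝕜 𝕜' : Type*} [NontriviallyNormedField 𝕜] [NontriviallyNormedField 𝕜']
  [NormedAlgebra 𝕜 𝕜']

theorem HasDerivAt.const_mul_div_riccati {N D : 𝕜 → 𝕜'} {k : 𝕜'} {t : 𝕜}
    (hN : HasDerivAt N (-k * D t) t) (hD : HasDerivAt D (-k * N t) t) (hDt : D t ≠ 0) :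
    HasDerivAt (fun s => k * (N s / D s)) ((k * (N t / D t)) ^ 2 - k ^ 2) t := by
  refine ((hN.div hD hDt).const_mul k).congr_deriv ?_
  field_simp
  ring

end Riccati

theorem hasDerivAt_cexp_mul_sub (k : ℂ) (T t : ℝ) :
    HasDerivAt (fun s : ℝ => exp (k * (T - s))) (-k * exp (k * (T - t))) t := by
  have h := (((hasDerivAt_id' (t : ℂ)).const_sub (T : ℂ)).const_mul k).cexp.comp_ofReal
  exact h.congr_deriv (by ring)

theorem hasDerivAt_riccati_exp (k a b : ℂ) (T t : ℝ)
    (h : a * exp (k * (T - t)) + b * exp (-(k * (T - t))) ≠ 0) :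
    HasDerivAt
      (fun s : ℝ => k * ((a * exp (k * (T - s)) - b * exp (-(k * (T - s)))) /
        (a * exp (k * (T - s)) + b * exp (-(k * (T - s))))))
      ((k * ((a * exp (k * (T - t)) - b * exp (-(k * (T - t)))) /
        (a * exp (k * (T - t)) + b * exp (-(k * (T - t)))))) ^ 2 - k ^ 2) t := by
  have hplus := hasDerivAt_cexp_mul_sub k T t
  have hminus : HasDerivAt (fun s : ℝ => exp (-(k * (T - s)))) (k * exp (-(k * (T - t)))) t := by
    simpa only [neg_mul, neg_neg] using hasDerivAt_cexp_mul_sub (-k) T t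
  refine HasDerivAt.const_mul_div_riccati ?_ ?_ h
  · exact ((hplus.const_mul a).sub (hminus.const_mul b)).congr_deriv (by ring)
  · exact ((hplus.const_mul a).add (hminus.const_mul b)).congr_deriv (by ring)

theorem Complex.norm_ofReal_sub_le_norm_ofReal_add {r : ℝ} (hr : 0 ≤ r) {w : ℂ}
    (hw : 0 ≤ w.re) : ‖(r : ℂ) - w‖ ≤ ‖(r : ℂ) + w‖ := by
  rw [← sq_le_sq₀ (norm_nonneg _) (norm_nonneg _), Complex.sq_norm, Complex.sq_norm, normSq_apply,
    normSq_apply]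
  simp only [sub_re, sub_im, add_re, add_im, ofReal_re, ofReal_im]
  nlinarith [mul_nonneg hr hw]

theorem Complex.mul_exp_add_mul_exp_neg_ne_zero {a b z : ℂ} (ha : a ≠ 0) (hab : ‖b‖ ≤ ‖a‖)
    (hz : 0 < z.re) : a * exp z + b * exp (-z) ≠ 0 := by
  have hlt : ‖b * exp (-z)‖ < ‖a * exp z‖ := by
    rw [norm_mul, norm_mul, norm_exp, norm_exp, neg_re]
    calc ‖b‖ * Real.exp (-z.re) ≤ ‖a‖ * Real.exp (-z.re) := by gcongr
      _ < ‖a‖ * Real.exp z.re := by gcongr; linarith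
  intro h
  rw [add_eq_zero_iff_eq_neg] at h
  rw [h, norm_neg] at hlt
  exact hlt.ne' rfl

theorem Complex.arg_eq_arctan_of_re_pos {z : ℂ} (hz : 0 < z.re) :
    arg z = Real.arctan (z.im / z.re) := by
  have hbound := abs_lt.1 (abs_arg_lt_pi_div_two_iff.2 (Or.inl hz))
  rw [← tan_arg, Real.arctan_tan hbound.1 hbound.2]

theorem one_sub_cos_two_pi_mul_pos {x : ℝ} (hx : x ∈ Set.Ioo (0 : ℝ) 1) :
    0 < 1 - Real.cos (2 * Real.pi * x) := by
  have hne : Real.cos (2 * Real.pi * x) ≠ 1 := by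
    rw [Ne, Real.cos_eq_one_iff_of_lt_of_lt] <;> nlinarith [Real.pi_pos, hx.1, hx.2]
  linarith [(Real.cos_le_one (2 * Real.pi * x)).lt_of_ne hne]

theorem re_one_sub_exp_neg_two_pi_I_mul (x : ℝ) :
    (1 - exp (-(2 * Real.pi * I * x))).re = 1 - Real.cos (2 * Real.pi * x) := by
  simp [exp_re]

theorem im_one_sub_exp_neg_two_pi_I_mul (x : ℝ) :
    (1 - exp (-(2 * Real.pi * I * x))).im = Real.sin (2 * Real.pi * x) := by
  simp [exp_im]

theorem frakr_sq (x : ℝ) : frakr x ^ 2 = ‖1 - exp (-(2 * Real.pi * I * x))‖ := by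
  have hnonneg : 0 ≤ 2 * (1 - Real.cos (2 * Real.pi * x)) := by
    linarith [Real.cos_le_one (2 * Real.pi * x)]
  rw [norm_def, normSq_apply, re_one_sub_exp_neg_two_pi_I_mul, im_one_sub_exp_neg_two_pi_I_mul,
    frakr, ← Real.rpow_natCast, ← Real.rpow_mul hnonneg, Real.sqrt_eq_rpow]
  congr 1
  · nlinarith [Real.sin_sq_add_cos_sq (2 * Real.pi * x)]
  · norm_num

theorem two_mul_thetaCat_eq_arg {x : ℝ} (hx : x ∈ Set.Ioo (0 : ℝ) 1) :
    2 * thetaCat x = arg (1 - exp (-(2 * Real.pi * I * x))) := by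
  have hre := re_one_sub_exp_neg_two_pi_I_mul x
  rw [arg_eq_arctan_of_re_pos (hre ▸ one_sub_cos_two_pi_mul_pos hx), hre,
    im_one_sub_exp_neg_two_pi_I_mul, thetaCat]
  ring

theorem rTheta_sq {x : ℝ} (hx : x ∈ Set.Ioo (0 : ℝ) 1) :
    rTheta x ^ 2 = 1 - exp (-(2 * Real.pi * I * x)) := calc
  rTheta x ^ 2 = (frakr x ^ 2 : ℝ) * exp ((2 * thetaCat x : ℝ) * I) := by
    rw [rTheta, mul_pow, ← exp_nat_mul]
    push_cast
    ring_nf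
  _ = 1 - exp (-(2 * Real.pi * I * x)) := by
    rw [frakr_sq, two_mul_thetaCat_eq_arg hx, norm_mul_exp_arg_mul_I]

theorem rTheta_re_pos {x : ℝ} (hx : x ∈ Set.Ioo (0 : ℝ) 1) : 0 < (rTheta x).re := by
  have hθ : thetaCat x ∈ Set.Ioo (-(Real.pi / 2)) (Real.pi / 2) := by
    have := Real.arctan_lt_pi_div_two
      (Real.sin (2 * Real.pi * x) / (1 - Real.cos (2 * Real.pi * x)))
    have := Real.neg_pi_div_two_lt_arctan
      (Real.sin (2 * Real.pi * x) / (1 - Real.cos (2 * Real.pi * x)))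
    constructor <;> (rw [thetaCat]; linarith [Real.pi_pos])
  have hr : 0 < frakr x := Real.rpow_pos_of_pos (by linarith [one_sub_cos_two_pi_mul_pos hx]) _
  rw [rTheta, mul_comm I, re_ofReal_mul, exp_ofReal_mul_I_re]
  exact mul_pos hr (Real.cos_pos_of_mem_Ioo hθ)

theorem ePlus_self (T ε x : ℝ) : ePlus T ε T x = 1 := by
  simp [ePlus]

theorem eMinus_self (T ε x : ℝ) : eMinus T ε T x = 1 := by
  simp [eMinus]

theorem aPlus_mul_ePlus_add_aMinus_mul_eMinus_ne_zero {T ε c t x : ℝ} (hε : 0 < ε) (hc : 0 ≤ c)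
    (hx : x ∈ Set.Ioo (0 : ℝ) 1) (ht : t ≤ T) :
    aPlus ε c x * ePlus T ε t x + aMinus ε c x * eMinus T ε t x ≠ 0 := by
  have hsqrt : 0 < Real.sqrt ε := Real.sqrt_pos.2 hε
  rcases ht.eq_or_lt with rfl | hlt
  · rw [ePlus_self, eMinus_self, aPlus, aMinus]
    ring_nf
    exact mul_ne_zero (ofReal_ne_zero.2 hsqrt.ne') two_ne_zero
  have hw : 0 ≤ ((c : ℂ) * rTheta x).re := by
    rw [re_ofReal_mul]
    exact mul_nonneg hc (rTheta_re_pos hx).le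
  refine mul_exp_add_mul_exp_neg_ne_zero ?_ (norm_ofReal_sub_le_norm_ofReal_add hsqrt.le hw) ?_
  · refine ne_zero_of_re_pos ?_
    rw [aPlus, add_re, ofReal_re]
    linarith
  · rw [← ofReal_sub, re_mul_ofReal, re_ofReal_mul]
    exact mul_pos (mul_pos hsqrt (rTheta_re_pos hx)) (sub_pos.2 hlt)

theorem fCat_self {T ε c x : ℝ} (hε : 0 < ε) (hx : x ∈ Set.Ioo (0 : ℝ) 1) :
    fCat T ε c T x = (1 - exp (-(2 * Real.pi * I * x))) * c := by
  have hsqrt : (Real.sqrt ε : ℂ) ≠ 0 := ofReal_ne_zero.2 (Real.sqrt_pos.2 hε).ne'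
  rw [fCat, ePlus_self, eMinus_self, aPlus, aMinus, ← rTheta_sq hx]
  field_simp [hsqrt]
  ring

theorem fCat_solves_auxiliary_riccati
    (T ε c : ℝ) (hε : 0 < ε) (hc : 0 ≤ c) :
    ∀ x ∈ Set.Ioo (0:ℝ) 1, ∀ t ∈ Set.Icc (0:ℝ) T,
      (aPlus ε c x * ePlus T ε t x + aMinus ε c x * eMinus T ε t x ≠ 0) ∧
      HasDerivWithinAt (fun s : ℝ => fCat T ε c s x)
        ((fCat T ε c t x) ^ 2 -
          (1 - Complex.exp (-(2 * Real.pi * Complex.I * (x : ℂ)))) * (ε : ℂ))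
        (Set.Icc (0:ℝ) T) t ∧
      fCat T ε c T x = (1 - Complex.exp (-(2 * Real.pi * Complex.I * (x : ℂ)))) * (c : ℂ) := by
  intro x hx t ht
  have hden := aPlus_mul_ePlus_add_aMinus_mul_eMinus_ne_zero hε hc hx ht.2
  have hk : ((Real.sqrt ε : ℂ) * rTheta x) ^ 2 = (1 - exp (-(2 * Real.pi * I * x))) * ε := by
    rw [mul_pow, ← ofReal_pow, Real.sq_sqrt hε.le, rTheta_sq hx, mul_comm]
  refine ⟨hden, ?_, fCat_self hε hx⟩
  rw [← hk]
  exact (hasDerivAt_riccati_exp _ (aPlus ε c x) (aMinus ε c x) T t hden).hasDerivWithinAt
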